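/- arXiv:dg-ga/9603001 — 4 statements merged into one kernel-verified Lean document; each statement's English description precedes it below -/
import Mathlib

section
/- Let 𝔤 be a Lie algebra over ℂ and let σ : 𝔤 → 𝔤 be a map which is additive, conjugate-linear (σ(c • x) = (conj c) • σ(x) for all c ∈ ℂ, x ∈ 𝔤), involutive (σ ∘ σ = id), and a Lie algebra automorphism (σ⁅x,y⁆ = ⁅σx, σy⁆). Let 𝔭₊ ⊆ 𝔤 be a ℂ-subspace such that every X ∈ 𝔭₊ with ⁅σX, X⁆ = 0 is zero, and set 𝔭₋ = σ(𝔭₊). Let 𝔞 ⊆ 𝔤 be a σ-stable ℂ-subspace on which the bracket vanishes identically (⁅x,y⁆ = 0 for all x, y ∈ 𝔞). Then 𝔞 ∩ 𝔭₊ = 0 and 𝔞 ∩ 𝔭₋ = 0. If moreover 𝔭₊ ∩ 𝔭₋ = 0, 𝔞 ⊆ 𝔭₊ + 𝔭₋, and 𝔞 is finite-dimensional, then the projections Pr₊ and Pr₋ of 𝔭₊ ⊕ 𝔭₋ onto 𝔭₊ and 𝔭₋ are injective on 𝔞, so that dim Pr₊(𝔞) = dim Pr₋(𝔞) = dim 𝔞.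 -/
/-- Lemma 1 of the paper (algebraic content): let `𝔤` be a complex Lie algebra with a
conjugation `σ` (additive, conjugate-linear, involutive Lie automorphism), `𝔭pos` a subspace
such that `⁅σX, X⁆ = 0` forces `X = 0` for `X ∈ 𝔭pos`, `𝔭neg = σ(𝔭pos)`, and `𝔞` a σ-stable
abelian subspace.  Then `𝔞 ∩ 𝔭pos = 0 = 𝔞 ∩ 𝔭neg`; moreover, if `𝔭pos ∩ 𝔭neg = 0`,
`𝔞 ⊆ 𝔭pos + 𝔭neg` and `𝔞` is finite dimensional, the projections `Pr₊`, `Pr₋` of `𝔭pos ⊕ 𝔭neg`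
onto `𝔭pos`, `𝔭neg` are injective on `𝔞`, whence `dim Pr₊(𝔞) = dim Pr₋(𝔞) = dim 𝔞`. -/
theorem stmt_0 {𝔤 : Type*} [LieRing 𝔤] [LieAlgebra ℂ 𝔤]
    (σ : 𝔤 → 𝔤)
    (hadd : ∀ x y : 𝔤, σ (x + y) = σ x + σ y)
    (hsmul : ∀ (c : ℂ) (x : 𝔤), σ (c • x) = (starRingEnd ℂ c) • σ x)
    (hinv : ∀ x : 𝔤, σ (σ x) = x)
    (hbracket : ∀ x y : 𝔤, σ ⁅x, y⁆ = ⁅σ x, σ y⁆)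
    (𝔭pos 𝔭neg 𝔞 : Submodule ℂ 𝔤)
    (h𝔭pos : ∀ X ∈ 𝔭pos, ⁅σ X, X⁆ = 0 → X = 0)
    (h𝔭neg : (𝔭neg : Set 𝔤) = σ '' (𝔭pos : Set 𝔤))
    (h𝔞σ : ∀ x ∈ 𝔞, σ x ∈ 𝔞)
    (h𝔞ab : ∀ x ∈ 𝔞, ∀ y ∈ 𝔞, ⁅x, y⁆ = 0) :
    (𝔞 ⊓ 𝔭pos = ⊥ ∧ 𝔞 ⊓ 𝔭neg = ⊥) ∧
    (𝔭pos ⊓ 𝔭neg = ⊥ → 𝔞 ≤ 𝔭pos ⊔ 𝔭neg → FiniteDimensional ℂ 𝔞 →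
      ∀ Ppos Pneg : 𝔤 →ₗ[ℂ] 𝔤,
        (∀ x ∈ 𝔭pos, Ppos x = x) → (∀ x ∈ 𝔭neg, Ppos x = 0) →
        (∀ x ∈ 𝔭neg, Pneg x = x) → (∀ x ∈ 𝔭pos, Pneg x = 0) →
        (∀ x ∈ 𝔞, Ppos x = 0 → x = 0) ∧ (∀ x ∈ 𝔞, Pneg x = 0 → x = 0) ∧
        Module.finrank ℂ (𝔞.map Ppos) = Module.finrank ℂ 𝔞 ∧
        Module.finrank ℂ (𝔞.map Pneg) = Module.finrank ℂ 𝔞) := by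
  have hσ0 : σ 0 = 0 := by
    have := hsmul 0 0
    simpa using this
  have h1 : 𝔞 ⊓ 𝔭pos = ⊥ := by
    rw [Submodule.eq_bot_iff]
    rintro x ⟨hx𝔞, hx𝔭⟩
    exact h𝔭pos x hx𝔭 (h𝔞ab _ (h𝔞σ x hx𝔞) _ hx𝔞)
  have h2 : 𝔞 ⊓ 𝔭neg = ⊥ := by
    rw [Submodule.eq_bot_iff]
    rintro x ⟨hx𝔞, hx𝔭⟩
    have : x ∈ σ '' (𝔭pos : Set 𝔤) := by rw [← h𝔭neg]; exact hx𝔭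
    obtain ⟨y, hy, rfl⟩ := this
    have hy0 : y = 0 := by
      refine h𝔭pos y hy ?_
      have := h𝔞ab _ hx𝔞 _ (h𝔞σ _ hx𝔞)
      rwa [hinv y] at this
    rw [hy0, hσ0]
  refine ⟨⟨h1, h2⟩, ?_⟩
  intro _ h𝔞le hfin Ppos Pneg hP1 hP2 hQ1 hQ2
  have hPposinj : ∀ x ∈ 𝔞, Ppos x = 0 → x = 0 := by
    intro x hx hPx
    obtain ⟨a, ha, b, hb, rfl⟩ := Submodule.mem_sup.mp (h𝔞le hx)
    have : Ppos (a + b) = a := by rw [map_add, hP1 a ha, hP2 b hb, add_zero]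
    have ha0 : a = 0 := by rw [← this, hPx]
    rw [ha0, zero_add] at hx ⊢
    have : b ∈ 𝔞 ⊓ 𝔭neg := ⟨hx, hb⟩
    rwa [h2, Submodule.mem_bot] at this
  have hPneginj : ∀ x ∈ 𝔞, Pneg x = 0 → x = 0 := by
    intro x hx hPx
    obtain ⟨a, ha, b, hb, rfl⟩ := Submodule.mem_sup.mp (h𝔞le hx)
    have : Pneg (a + b) = b := by rw [map_add, hQ1 b hb, hQ2 a ha, zero_add]
    have hb0 : b = 0 := by rw [← this, hPx]
    rw [hb0, add_zero] at hx ⊢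
    have : a ∈ 𝔞 ⊓ 𝔭pos := ⟨hx, ha⟩
    rwa [h1, Submodule.mem_bot] at this
  have key : ∀ P : 𝔤 →ₗ[ℂ] 𝔤, (∀ x ∈ 𝔞, P x = 0 → x = 0) →
      Module.finrank ℂ (𝔞.map P) = Module.finrank ℂ 𝔞 := by
    intro P hinj
    rw [← LinearMap.range_domRestrict]
    exact LinearMap.finrank_range_of_inj (by
      intro ⟨x, hx⟩ ⟨y, hy⟩ hxy
      have : P (x - y) = 0 := by
        simp only [LinearMap.domRestrict_apply] at hxy
        rw [map_sub, hxy, sub_self]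
      have := hinj _ (Submodule.sub_mem _ hx hy) this
      exact Subtype.ext (sub_eq_zero.mp this) )
  exact ⟨hPposinj, hPneginj, key Ppos hPposinj, key Pneg hPneginj⟩
end

section
/- Let r ≥ 1 and m be natural numbers and let e : ℕ → ℤ be a function with e(a) = 0 for a > m − r. Define d(q) = ∑_{a=0}^{q} C(r, q − a) · e(a). Then ∑_{q=0}^{m} q (−1)^{q+1} d(q) = ∑_{a} (−1)^{a} e(a) if r = 1, and ∑_{q=0}^{m} q (−1)^{q+1} d(q) = 0 if r ≥ 2. -/
open Finset

lemma altA (s N : ℕ) (h : s < N) :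
    ∑ k ∈ range N, (-1 : ℤ) ^ k * s.choose k = if s = 0 then 1 else 0 := by
  rw [← Int.alternating_sum_range_choose (n := s)]
  apply (Finset.sum_subset _ _).symm
  · intro x hx
    simp only [mem_range] at hx ⊢; omega
  · intro x _ hx
    simp only [mem_range, not_lt] at hx
    rw [Nat.choose_eq_zero_of_lt (by omega)]
    simp

lemma altB (r N : ℕ) (h : r < N) :
    ∑ j ∈ range N, (j : ℤ) * (-1) ^ j * r.choose j = if r = 1 then -1 else 0 := by
  obtain ⟨n, rfl⟩ : ∃ n, N = n + 1 := ⟨N - 1, by omega⟩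
  rw [Finset.sum_range_succ']
  simp only [Nat.cast_zero, zero_mul, add_zero]
  rcases Nat.eq_zero_or_pos r with rfl | hr
  · simp [Nat.choose_eq_zero_of_lt]
  obtain ⟨s, rfl⟩ : ∃ s, r = s + 1 := ⟨r - 1, by omega⟩
  have key : ∀ i : ℕ, ((i : ℤ) + 1) * (-1) ^ (i + 1) * ((s + 1).choose (i + 1) : ℤ)
      = -((s + 1 : ℤ) * ((-1) ^ i * s.choose i)) := by
    intro i
    have := Nat.add_one_mul_choose_eq s i
    have h2 : ((s+1).choose (i+1) : ℤ) * (i + 1) = (s + 1) * s.choose i := by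
      exact_mod_cast congrArg (Nat.cast : ℕ → ℤ) this.symm
    rw [pow_succ]
    linear_combination (-(-1 : ℤ)^i) * h2
  calc ∑ i ∈ range n, ((i : ℤ) + 1) * (-1) ^ (i + 1) * ((s + 1).choose (i + 1) : ℤ)
      = ∑ i ∈ range n, -((s + 1 : ℤ) * ((-1) ^ i * s.choose i)) := by
        exact Finset.sum_congr rfl fun i _ => key i
    _ = -((s + 1 : ℤ) * ∑ i ∈ range n, (-1 : ℤ) ^ i * s.choose i) := by
        rw [Finset.sum_neg_distrib, Finset.mul_sum]
    _ = if s + 1 = 1 then -1 else 0 := by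
        rw [altA s n (by omega)]
        rcases Nat.eq_zero_or_pos s with rfl | hs <;> simp <;> omega

/-- Combinatorial core of the proposition on pseudocuspforms: with `r ≥ 1`,
`e : ℕ → ℤ` vanishing for `a > m − r`, and `d q = ∑_{a=0}^{q} C(r, q−a) e(a)`,
the sum `∑_{q=0}^{m} q (−1)^{q+1} d(q)` equals `∑_a (−1)^a e(a)` if `r = 1`
and `0` if `r ≥ 2`. -/
theorem stmt_2 (r m : ℕ) (hr : 1 ≤ r) (e : ℕ → ℤ)
    (he : ∀ a : ℕ, (m : ℤ) - (r : ℤ) < (a : ℤ) → e a = 0) :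
    (r = 1 →
      ∑ q ∈ Finset.range (m + 1), (q : ℤ) * (-1) ^ (q + 1) *
          (∑ a ∈ Finset.range (q + 1), (r.choose (q - a) : ℤ) * e a)
        = ∑ a ∈ Finset.range (m + 1), (-1) ^ a * e a) ∧
    (2 ≤ r →
      ∑ q ∈ Finset.range (m + 1), (q : ℤ) * (-1) ^ (q + 1) *
          (∑ a ∈ Finset.range (q + 1), (r.choose (q - a) : ℤ) * e a) = 0) := by
  have main : ∑ q ∈ Finset.range (m + 1), (q : ℤ) * (-1) ^ (q + 1) *
      (∑ a ∈ Finset.range (q + 1), (r.choose (q - a) : ℤ) * e a)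
      = ∑ a ∈ Finset.range (m + 1), (if r = 1 then (-1 : ℤ) ^ a * e a else 0) := by
    have step1 : ∑ q ∈ Finset.range (m + 1), (q : ℤ) * (-1) ^ (q + 1) *
        (∑ a ∈ Finset.range (q + 1), (r.choose (q - a) : ℤ) * e a)
        = ∑ a ∈ Finset.range (m + 1), ∑ q ∈ Finset.Ico a (m + 1),
            (q : ℤ) * (-1) ^ (q + 1) * ((r.choose (q - a) : ℤ) * e a) := by
      simp_rw [Finset.mul_sum]
      simp only [Finset.range_eq_Ico]
      rw [← Finset.sum_Ico_Ico_comm 0 (m+1)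
        (fun a q => (q : ℤ) * (-1) ^ (q + 1) * ((r.choose (q - a) : ℤ) * e a))]
    rw [step1]
    apply Finset.sum_congr rfl
    intro a ha
    rcases eq_or_ne (e a) 0 with h0 | h0
    · simp [h0]
    · have haw : a + r ≤ m := by
        by_contra hc
        exact h0 (he a (by push_cast; omega))
      rw [Finset.sum_Ico_eq_sum_range]
      have hsimp : ∀ j ∈ range (m + 1 - a),
          ((a + j : ℕ) : ℤ) * (-1) ^ ((a + j) + 1) * ((r.choose ((a + j) - a) : ℤ) * e a)
          = e a * (-1) ^ (a + 1) *
            ((a : ℤ) * ((-1) ^ j * r.choose j) + (j : ℤ) * (-1) ^ j * r.choose j) := by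
        intro j _
        rw [Nat.add_sub_cancel_left]
        have : (-1 : ℤ) ^ (a + j + 1) = (-1) ^ (a + 1) * (-1) ^ j := by
          rw [← pow_add]; ring_nf
        rw [this]; push_cast; ring
      rw [Finset.sum_congr rfl hsimp]
      have hN : r < m + 1 - a := by omega
      rw [← Finset.mul_sum, Finset.sum_add_distrib, ← Finset.mul_sum,
        altA r _ hN, altB r _ hN]
      rcases eq_or_ne r 1 with h1 | h1
      · simp [h1, pow_succ]; ring
      · simp [h1, Nat.one_le_iff_ne_zero.mp hr]
  constructor
  · intro h1
    rw [main]
    simp [h1]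
  · intro h2
    rw [main]
    have : r ≠ 1 := by omega
    simp [this]
end

section
/- Let θ : (0,∞) → ℂ be continuous and suppose there are constants C, δ > 0 with ‖θ(t)‖ ≤ C e^{−δt} for all t ≥ 1. Suppose there is a strictly increasing sequence of real numbers α₀ < α₁ < α₂ < ⋯ with α_k → +∞ and complex numbers c_k such that for every K there is a constant C_K with ‖θ(t) − ∑_{k=0}^{K} c_k t^{α_k}‖ ≤ C_K t^{α_{K+1}} for all t ∈ (0,1]. Fix λ ≥ 0. Then: (a) for every z ∈ ℂ with Re z > −α₀ the integral M(z) = ∫₀^∞ t^{z−1} e^{−λt} θ(t) dt converges absolutely; (b) setting P = {−α_k − n : k ∈ ℕ, n ∈ ℕ} (a discrete subset of ℝ), there is a function F, holomorphic on ℂ ∖ P, with F(z) = M(z) for all z with Re z > −α₀ and z ∉ P; and (c) every point p ∈ P is at most a simple pole of F, with lim_{z→p} (z − p) F(z) = ∑_{(k,n) : α_k + n = −p} (−λ)^n c_k / n!. -/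
/-!
Multiplying the expansion of `θ` at `0` by the Taylor expansion of `e^{-λt}` gives
`e^{-λt} θ(t) = ∑_{k, n ≤ N} (-λ)^n c_k / n! · t^{α_k + n} + O(t^{γ_N})` as `t → 0⁺`, with
`γ_N = min (α_{N+1}) (α_0 + N + 1)`. Cut off at `t = 1`, the monomial `t^{α_k + n}` has Mellin
transform `1 / (z + α_k + n)`, while the remainder, being `O(t^{γ_N})` at `0` and exponentially
small at `∞`, has a Mellin transform holomorphic on `Re z > -γ_N`. Hence
`M(z) = 𝓜(remainder_N)(z) + ∑_{k, n ≤ N} (-λ)^n c_k / (n! (z + α_k + n))`, and the right-hand side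
continues `M` to `Re z > -γ_N`. These continuations agree for different `N`, `γ_N → ∞`, and the
residues are read off the finite sums of simple fractions.
-/

open MeasureTheory Filter Set Asymptotics Topology

theorem hasMellin_indicator_Ioc_sum_cpow {ι : Type*} (s : Finset ι) (a β : ι → ℂ) {z : ℂ}
    (hz : ∀ i ∈ s, 0 < z.re + (β i).re) :
    HasMellin ((Ioc 0 1).indicator fun t : ℝ ↦ ∑ i ∈ s, a i * (t : ℂ) ^ β i) z
      (∑ i ∈ s, a i / (z + β i)) := by
  classical
  induction s using Finset.induction_on with
  | empty => simp [HasMellin, MellinConvergent, mellin]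
  | insert i s hi ih =>
    rw [Finset.forall_mem_insert] at hz
    have hterm := hasMellin_cpow_Ioc (β i) hz.1
    have hsum := hasMellin_add (hasMellin_const_smul hterm.1 (a i)).1 (ih hz.2).1
    rw [mellin_const_smul, hterm.2, (ih hz.2).2, smul_eq_mul, mul_one_div] at hsum
    have hsplit : ((Ioc 0 1).indicator fun t : ℝ ↦ ∑ i ∈ insert i s, a i * (t : ℂ) ^ β i) =
        fun t ↦ a i • (Ioc 0 1).indicator (fun t : ℝ ↦ (t : ℂ) ^ β i) t +
          (Ioc 0 1).indicator (fun t : ℝ ↦ ∑ i ∈ s, a i * (t : ℂ) ^ β i) t := by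
      ext t
      by_cases ht : t ∈ Ioc 0 1 <;> simp [ht, Finset.sum_insert hi]
    rwa [hsplit, Finset.sum_insert hi]

theorem hasMellin_add_indicator_Ioc_sum_cpow {f : ℝ → ℂ} {z : ℂ} (hf : MellinConvergent f z)
    {ι : Type*} (s : Finset ι) (a β : ι → ℂ) (hz : ∀ i ∈ s, 0 < z.re + (β i).re) :
    HasMellin (fun t ↦ f t + (Ioc 0 1).indicator (fun t : ℝ ↦ ∑ i ∈ s, a i * (t : ℂ) ^ β i) t)
      z (mellin f z + ∑ i ∈ s, a i / (z + β i)) := by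
  have h := hasMellin_indicator_Ioc_sum_cpow s a β hz
  rw [← h.2]
  exact hasMellin_add hf h.1

theorem isBigO_rpow_rpow_nhdsGT_zero {a b : ℝ} (h : a ≤ b) :
    (· ^ b : ℝ → ℝ) =O[𝓝[>] 0] (· ^ a) :=
  .of_bound' <| mem_of_superset (Ioc_mem_nhdsGT one_pos) fun t ht ↦ by
    simpa [Real.abs_rpow_of_nonneg ht.1.le, abs_of_pos ht.1]
      using Real.rpow_le_rpow_of_exponent_ge ht.1 ht.2 h

theorem isBigO_nhdsGT_zero_of_le_mul_rpow {E : Type*} [Norm E] {f : ℝ → E} {C a : ℝ}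
    (hf : ∀ t ∈ Ioc (0 : ℝ) 1, ‖f t‖ ≤ C * t ^ a) : f =O[𝓝[>] 0] (· ^ a) :=
  .of_bound C <| mem_of_superset (Ioc_mem_nhdsGT one_pos) fun t ht ↦ by
    simpa [Real.abs_rpow_of_nonneg ht.1.le, abs_of_pos ht.1] using hf t ht

theorem Complex.exp_mul_sub_sum_range_isBigO_pow (w : ℂ) (n : ℕ) :
    (fun t : ℝ ↦ exp (w * t) - ∑ m ∈ Finset.range n, (w * t) ^ m / m.factorial) =O[𝓝 0]
      (· ^ n) := by
  have h0 : Tendsto (fun t : ℝ ↦ w * t) (𝓝 0) (𝓝 0) :=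
    Continuous.tendsto' (by fun_prop) 0 0 (by simp)
  refine ((exp_sub_sum_range_isBigO_pow n).comp_tendsto h0).trans
    (.of_bound (‖w‖ ^ n) (.of_forall fun t ↦ ?_))
  simp [mul_pow]

theorem tendsto_sub_mul_div_add (a β p : ℂ) :
    Tendsto (fun z ↦ (z - p) * (a / (z + β))) (𝓝[≠] p) (𝓝 (if β = -p then a else 0)) := by
  split_ifs with hβ
  · refine tendsto_const_nhds.congr' ?_
    filter_upwards [self_mem_nhdsWithin] with z hz
    rw [hβ, ← sub_eq_add_neg, mul_div_cancel₀ _ (sub_ne_zero.mpr hz)]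
  · have hne : p + β ≠ 0 := fun h ↦ hβ (by linear_combination h)
    have hcont : ContinuousAt (fun z ↦ (z - p) * (a / (z + β))) p :=
      (continuousAt_id.sub continuousAt_const).mul
        (continuousAt_const.div (continuousAt_id.add continuousAt_const) hne)
    simpa using hcont.tendsto.mono_left nhdsWithin_le_nhds

theorem tendsto_sub_mul_add_sum_div {G : ℂ → ℂ} {p : ℂ} (hG : ContinuousAt G p)
    {ι : Type*} (s : Finset ι) (a β : ι → ℂ) :
    Tendsto (fun z ↦ (z - p) * (G z + ∑ i ∈ s, a i / (z + β i))) (𝓝[≠] p)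
      (𝓝 (∑ i ∈ s, if β i = -p then a i else 0)) := by
  have hcont : ContinuousAt (fun z ↦ (z - p) * G z) p :=
    (continuousAt_id.sub continuousAt_const).mul hG
  have hG' : Tendsto (fun z ↦ (z - p) * G z) (𝓝[≠] p) (𝓝 0) := by
    simpa using hcont.tendsto.mono_left nhdsWithin_le_nhds
  simpa [mul_add, Finset.mul_sum] using
    hG'.add (tendsto_finsetSum s fun i _ ↦ tendsto_sub_mul_div_add (a i) (β i) p)

namespace HeatTraceMellin

def box (N : ℕ) : Finset (ℕ × ℕ) := Finset.range (N + 1) ×ˢ Finset.range (N + 1)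

variable (α : ℕ → ℝ) (c : ℕ → ℂ) (lam : ℝ) (θ : ℝ → ℂ)

def expo (q : ℕ × ℕ) : ℂ := α q.1 + q.2

noncomputable def coeff (q : ℕ × ℕ) : ℂ := (-(lam : ℂ)) ^ q.2 * c q.1 / (q.2.factorial : ℂ)

def order (N : ℕ) : ℝ := min (α (N + 1)) (α 0 + (N + 1))

noncomputable def damped (t : ℝ) : ℂ := Complex.exp (-(lam : ℂ) * t) * θ t

noncomputable def remainder (N : ℕ) (t : ℝ) : ℂ :=
  damped lam θ t -
    (Ioc 0 1).indicator (fun t : ℝ ↦ ∑ q ∈ box N, coeff c lam q * (t : ℂ) ^ expo α q) t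

noncomputable def continuation (N : ℕ) (z : ℂ) : ℂ :=
  mellin (remainder α c lam θ N) z + ∑ q ∈ box N, coeff c lam q / (z + expo α q)

variable {α c lam θ}

theorem re_expo (q : ℕ × ℕ) : (expo α q).re = α q.1 + q.2 := by simp [expo]

theorem le_re_expo (hα : Monotone α) (q : ℕ × ℕ) : α 0 ≤ (expo α q).re := by
  rw [re_expo]
  linarith [hα (Nat.zero_le q.1), (Nat.cast_nonneg q.2 : (0 : ℝ) ≤ q.2)]

theorem order_le_re_expo (hα : Monotone α) {N : ℕ} {q : ℕ × ℕ} (hq : q ∉ box N) :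
    order α N ≤ (expo α q).re := by
  simp only [box, Finset.mem_product, Finset.mem_range, not_and_or, not_lt] at hq
  rw [re_expo, order]
  rcases hq with hk | hn
  · exact (min_le_left _ _).trans (by linarith [hα hk, (Nat.cast_nonneg q.2 : (0 : ℝ) ≤ q.2)])
  · have hn' : (N : ℝ) + 1 ≤ q.2 := by exact_mod_cast hn
    exact (min_le_right _ _).trans (by linarith [hα (Nat.zero_le q.1)])

theorem lt_order (hα : StrictMono α) (N : ℕ) : α 0 < order α N :=
  lt_min (hα N.succ_pos) (by linarith [(N.cast_nonneg : (0 : ℝ) ≤ N)])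

theorem order_mono (hα : Monotone α) : Monotone (order α) := fun N N' h ↦
  min_le_min (hα (by omega)) (by gcongr)

theorem exists_lt_order (hαtop : Tendsto α atTop atTop) (R : ℝ) : ∃ N, R < order α N := by
  obtain ⟨N, hαN, hN⟩ := (((hαtop.comp (tendsto_add_atTop_nat 1)).eventually_gt_atTop R).and
    (tendsto_natCast_atTop_atTop.eventually_gt_atTop (R - α 0))).exists
  exact ⟨N, lt_min hαN (by linarith)⟩

theorem sum_box_coeff_mul_cpow (N : ℕ) {t : ℝ} (ht : 0 < t) :
    ∑ q ∈ box N, coeff c lam q * (t : ℂ) ^ expo α q =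
      (∑ n ∈ Finset.range (N + 1), (-(lam : ℂ) * t) ^ n / n.factorial) *
        ∑ k ∈ Finset.range (N + 1), c k * ((t ^ α k : ℝ) : ℂ) := by
  rw [box, Finset.sum_product, Finset.sum_mul_sum, Finset.sum_comm]
  refine Finset.sum_congr rfl fun n _ ↦ Finset.sum_congr rfl fun k _ ↦ ?_
  rw [coeff, expo, Complex.cpow_add _ _ (Complex.ofReal_ne_zero.mpr ht.ne'),
    Complex.cpow_natCast, Complex.ofReal_cpow ht.le, mul_pow]
  ring

theorem remainder_isBigO_nhdsGT (hα : Monotone α) (N : ℕ)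
    (hθ : (fun t ↦ θ t - ∑ k ∈ Finset.range (N + 1), c k * ((t ^ α k : ℝ) : ℂ)) =O[𝓝[>] 0]
      (· ^ α (N + 1))) :
    remainder α c lam θ N =O[𝓝[>] 0] (· ^ order α N) := by
  -- On `(0, 1]` the remainder is `e (θ - S) + (e - T) S`, `T` the Taylor polynomial of `e`.
  set S := fun t : ℝ ↦ ∑ k ∈ Finset.range (N + 1), c k * ((t ^ α k : ℝ) : ℂ)
  set T := fun t : ℝ ↦ ∑ n ∈ Finset.range (N + 1), (-(lam : ℂ) * t) ^ n / n.factorial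
  set e := fun t : ℝ ↦ Complex.exp (-(lam : ℂ) * t)
  have he : e =O[𝓝[>] 0] (fun _ ↦ (1 : ℝ)) :=
    ((Continuous.tendsto (by fun_prop) 0).mono_left nhdsWithin_le_nhds).isBigO_one ℝ
  have hT : (fun t ↦ e t - T t) =O[𝓝[>] 0] (· ^ ((N + 1 : ℕ) : ℝ)) :=
    ((Complex.exp_mul_sub_sum_range_isBigO_pow _ (N + 1)).mono nhdsWithin_le_nhds).congr_right
      fun t ↦ (Real.rpow_natCast t (N + 1)).symm
  have hS : S =O[𝓝[>] 0] (· ^ α 0) := IsBigO.fun_sum fun k _ ↦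
    (Complex.isBigO_ofReal_left.mpr (isBigO_rpow_rpow_nhdsGT_zero (hα k.zero_le))).const_mul_left _
  have hfirst : (fun t ↦ e t * (θ t - S t)) =O[𝓝[>] 0] (· ^ order α N) :=
    (he.mul hθ).trans (by simpa only [one_mul] using
      isBigO_rpow_rpow_nhdsGT_zero (a := order α N) (min_le_left _ _))
  have hsecond : (fun t ↦ (e t - T t) * S t) =O[𝓝[>] 0] (· ^ order α N) := by
    refine (hT.mul hS).trans <| IsBigO.trans ?_ <|
      isBigO_rpow_rpow_nhdsGT_zero (a := order α N) (min_le_right _ _)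
    refine (isBigO_refl _ _).congr' .rfl (eventually_mem_nhdsWithin.mono fun t ht ↦ ?_)
    simp only [← Real.rpow_add ht]
    push_cast
    ring_nf
  refine (hfirst.add hsecond).congr' ?_ .rfl
  filter_upwards [Ioc_mem_nhdsGT one_pos] with t ht
  rw [remainder, damped, indicator_of_mem ht, sum_box_coeff_mul_cpow N ht.1]
  ring

theorem remainder_isBigO_atTop (hlam : 0 ≤ lam) {C δ : ℝ}
    (hdecay : ∀ t : ℝ, 1 ≤ t → ‖θ t‖ ≤ C * Real.exp (-δ * t)) (N : ℕ) :
    remainder α c lam θ N =O[atTop] fun t ↦ Real.exp (-δ * t) := by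
  refine .of_bound C ?_
  filter_upwards [eventually_gt_atTop 1] with t ht
  have hexp : ‖Complex.exp (-(lam : ℂ) * t)‖ ≤ 1 := by
    rw [Complex.norm_exp]
    simpa using mul_nonneg hlam (zero_le_one.trans ht.le)
  rw [remainder, indicator_of_notMem fun h ↦ ht.not_ge h.2, sub_zero, damped, norm_mul,
    Real.norm_of_nonneg (Real.exp_pos _).le]
  exact (mul_le_of_le_one_left (norm_nonneg _) hexp).trans (hdecay t ht.le)

theorem locallyIntegrableOn_remainder (hθ : ContinuousOn θ (Ioi 0)) (N : ℕ) :
    LocallyIntegrableOn (remainder α c lam θ N) (Ioi 0) := by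
  have hdamped : ContinuousOn (damped lam θ) (Ioi 0) :=
    (Continuous.continuousOn (by fun_prop)).mul hθ
  have hsum : ContinuousOn (fun t : ℝ ↦ ∑ q ∈ box N, coeff c lam q * (t : ℂ) ^ expo α q)
      (Ioi 0) := continuousOn_finsetSum _ fun q _ t ht ↦ ContinuousAt.continuousWithinAt <|
    continuousAt_const.mul (Complex.continuousAt_ofReal_cpow_const t _ (Or.inr ht.ne'))
  refine (hdamped.locallyIntegrableOn measurableSet_Ioi).sub ?_
  rw [locallyIntegrableOn_iff isOpen_Ioi.isLocallyClosed]
  intro k hk hkc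
  rw [IntegrableOn, integrable_indicator_iff measurableSet_Ioc]
  exact ((hsum.mono hk).integrableOn_compact hkc).integrable.integrableOn

theorem mellinConvergent_and_differentiableAt_remainder (hθ : ContinuousOn θ (Ioi 0))
    (hlam : 0 ≤ lam) {C δ : ℝ} (hδ : 0 < δ)
    (hdecay : ∀ t : ℝ, 1 ≤ t → ‖θ t‖ ≤ C * Real.exp (-δ * t)) (hα : Monotone α) {N : ℕ}
    (hθN : (fun t ↦ θ t - ∑ k ∈ Finset.range (N + 1), c k * ((t ^ α k : ℝ) : ℂ)) =O[𝓝[>] 0]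
      (· ^ α (N + 1)))
    {z : ℂ} (hz : -order α N < z.re) :
    MellinConvergent (remainder α c lam θ N) z ∧
      DifferentiableAt ℂ (mellin (remainder α c lam θ N)) z := by
  have hloc : LocallyIntegrableOn (remainder α c lam θ N) (Ioi 0) :=
    locallyIntegrableOn_remainder hθ N
  have htop : remainder α c lam θ N =O[atTop] fun t ↦ Real.exp (-δ * t) :=
    remainder_isBigO_atTop hlam hdecay N
  have hbot : remainder α c lam θ N =O[𝓝[>] 0] (· ^ (-(-order α N))) := by
    simpa using remainder_isBigO_nhdsGT hα N hθN
  exact ⟨mellinConvergent_of_isBigO_rpow_exp hδ hloc htop hbot hz,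
    mellin_differentiableAt_of_isBigO_rpow_exp hδ hloc htop hbot hz⟩

theorem hasMellin_damped (hα : Monotone α) {N : ℕ} {z : ℂ}
    (hR : MellinConvergent (remainder α c lam θ N) z) (hz : -α 0 < z.re) :
    HasMellin (damped lam θ) z (continuation α c lam θ N z) := by
  have hsplit : damped lam θ = fun t ↦ remainder α c lam θ N t +
      (Ioc 0 1).indicator (fun t : ℝ ↦ ∑ q ∈ box N, coeff c lam q * (t : ℂ) ^ expo α q) t := by
    ext t
    rw [remainder, sub_add_cancel]
  rw [hsplit]
  exact hasMellin_add_indicator_Ioc_sum_cpow hR _ _ _ fun q _ ↦ by linarith [le_re_expo hα q]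

theorem continuation_eq_of_le (hα : Monotone α) {N N' : ℕ} (hNN' : N ≤ N') {z : ℂ}
    (hz : -order α N < z.re) (hR : MellinConvergent (remainder α c lam θ N') z) :
    continuation α c lam θ N z = continuation α c lam θ N' z := by
  have hbox : box N ⊆ box N' := Finset.product_subset_product
    (Finset.range_subset_range.mpr (by omega)) (Finset.range_subset_range.mpr (by omega))
  have hsplit : remainder α c lam θ N = fun t ↦ remainder α c lam θ N' t +
      (Ioc 0 1).indicator
        (fun t : ℝ ↦ ∑ q ∈ box N' \ box N, coeff c lam q * (t : ℂ) ^ expo α q) t := by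
    ext t
    by_cases ht : t ∈ Ioc 0 1
    · simp only [remainder, indicator_of_mem ht, ← Finset.sum_sdiff hbox]
      ring
    · simp [remainder, indicator_of_notMem ht]
  have hmellin := hasMellin_add_indicator_Ioc_sum_cpow hR (box N' \ box N) (coeff c lam)
    (expo α) fun q hq ↦ by linarith [order_le_re_expo hα (Finset.mem_sdiff.mp hq).2]
  rw [← hsplit] at hmellin
  rw [continuation, continuation, hmellin.2, add_assoc, Finset.sum_sdiff hbox]

theorem continuation_eq_continuation (hα : Monotone α)
    (hR : ∀ N z, -order α N < z.re → MellinConvergent (remainder α c lam θ N) z)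
    {N M : ℕ} {z : ℂ} (hN : -order α N < z.re) (hM : -order α M < z.re) :
    continuation α c lam θ N z = continuation α c lam θ M z := by
  have hmax : -order α (max N M) < z.re :=
    lt_of_le_of_lt (neg_le_neg (order_mono hα (le_max_left N M))) hN
  exact (continuation_eq_of_le hα (le_max_left N M) hN (hR _ _ hmax)).trans
    (continuation_eq_of_le hα (le_max_right N M) hM (hR _ _ hmax)).symm

theorem differentiableAt_continuation {N : ℕ} {z : ℂ}
    (hR : DifferentiableAt ℂ (mellin (remainder α c lam θ N)) z)
    (hz : ∀ k n : ℕ, z ≠ -(α k : ℂ) - (n : ℂ)) :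
    DifferentiableAt ℂ (continuation α c lam θ N) z := by
  refine hR.add (DifferentiableAt.fun_sum fun q _ ↦ ?_)
  refine (differentiableAt_const _).div (differentiableAt_id.add_const _) fun h ↦ hz q.1 q.2 ?_
  simp only [expo] at h
  linear_combination h

theorem tendsto_sub_mul_continuation {N : ℕ} {p : ℂ}
    (hR : ContinuousAt (mellin (remainder α c lam θ N)) p) :
    Tendsto (fun z ↦ (z - p) * continuation α c lam θ N z) (𝓝[≠] p)
      (𝓝 (∑ q ∈ box N, if expo α q = -p then coeff c lam q else 0)) :=
  tendsto_sub_mul_add_sum_div hR _ _ _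

theorem tsum_tsum_ite_eq_sum_box (hα : Monotone α) {N : ℕ} {p : ℂ} (hp : -order α N < p.re) :
    (∑' k : ℕ, ∑' n : ℕ,
        if (α k : ℂ) + (n : ℂ) = -p then (-(lam : ℂ)) ^ n * c k / (n.factorial : ℂ) else 0) =
      ∑ q ∈ box N, if expo α q = -p then coeff c lam q else 0 := by
  have hzero : ∀ q ∉ box N, (if expo α q = -p then coeff c lam q else 0) = 0 := fun q hq ↦
    if_neg fun h ↦ (order_le_re_expo hα hq).not_gt (by simp [h]; linarith)
  rw [box, Finset.sum_product]
  rw [tsum_eq_sum (s := Finset.range (N + 1)) fun k hk ↦ ?_]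
  · refine Finset.sum_congr rfl fun k _ ↦ tsum_eq_sum fun n hn ↦ hzero (k, n) ?_
    simp [box, hn]
  · exact (tsum_congr fun n ↦ hzero (k, n) (by simp_all [box])).trans tsum_zero

theorem smul_damped (z : ℂ) (t : ℝ) :
    (t : ℂ) ^ (z - 1) • damped lam θ t =
      (t : ℂ) ^ (z - 1) * Complex.exp (-(lam : ℂ) * t) * θ t := by
  rw [smul_eq_mul, damped, mul_assoc]

end HeatTraceMellin

open HeatTraceMellin in
theorem stmt_3_general (θ : ℝ → ℂ) (hcont : ContinuousOn θ (Set.Ioi 0))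
    (C δ : ℝ) (hδ : 0 < δ)
    (hdecay : ∀ t : ℝ, 1 ≤ t → ‖θ t‖ ≤ C * Real.exp (-δ * t))
    (α : ℕ → ℝ) (hα : StrictMono α) (hαtop : Tendsto α atTop atTop)
    (c : ℕ → ℂ)
    (hasym : ∀ K : ℕ, ∃ CK : ℝ, ∀ t ∈ Set.Ioc (0 : ℝ) 1,
      ‖θ t - ∑ k ∈ Finset.range (K + 1), c k * ((t ^ (α k) : ℝ) : ℂ)‖ ≤ CK * t ^ (α (K + 1)))
    (lam : ℝ) (hlam : 0 ≤ lam) :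
    (∀ z : ℂ, -α 0 < z.re →
      IntegrableOn (fun t : ℝ => (t : ℂ) ^ (z - 1) * Complex.exp (-(lam : ℂ) * t) * θ t)
        (Set.Ioi 0)) ∧
    ∃ F : ℂ → ℂ,
      DifferentiableOn ℂ F {z : ℂ | ∀ k n : ℕ, z ≠ -(α k : ℂ) - (n : ℂ)} ∧
      (∀ z : ℂ, -α 0 < z.re → (∀ k n : ℕ, z ≠ -(α k : ℂ) - (n : ℂ)) →
        F z = ∫ t in Set.Ioi (0 : ℝ),
          (t : ℂ) ^ (z - 1) * Complex.exp (-(lam : ℂ) * t) * θ t) ∧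
      (∀ p : ℂ, (∃ k n : ℕ, p = -(α k : ℂ) - (n : ℂ)) →
        Tendsto (fun z : ℂ => (z - p) * F z) (nhdsWithin p {p}ᶜ)
          (nhds (∑' k : ℕ, ∑' n : ℕ,
            if (α k : ℂ) + (n : ℂ) = -p then (-(lam : ℂ)) ^ n * c k / (n.factorial : ℂ)
            else 0))) := by
  have hR (N : ℕ) (z : ℂ) (hz : -order α N < z.re) :
      MellinConvergent (remainder α c lam θ N) z ∧
        DifferentiableAt ℂ (mellin (remainder α c lam θ N)) z :=
    have ⟨_, hCN⟩ := hasym N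
    mellinConvergent_and_differentiableAt_remainder hcont hlam hδ hdecay hα.monotone
      (isBigO_nhdsGT_zero_of_le_mul_rpow hCN) hz
  have hmellin (z : ℂ) (hz : -α 0 < z.re) :
      HasMellin (damped lam θ) z (continuation α c lam θ 0 z) :=
    hasMellin_damped hα.monotone (hR 0 z (by linarith [lt_order hα 0])).1 hz
  choose N hN using fun z : ℂ ↦ (exists_lt_order hαtop (-z.re)).imp fun _ ↦ neg_lt.mp
  have hF (M : ℕ) (z₀ : ℂ) (hM : -order α M < z₀.re) :
      (fun z ↦ continuation α c lam θ (N z) z) =ᶠ[𝓝 z₀] continuation α c lam θ M := by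
    filter_upwards [(isOpen_lt continuous_const Complex.continuous_re).mem_nhds hM] with z hz
    exact continuation_eq_continuation hα.monotone (fun N z hz ↦ (hR N z hz).1) (hN z) hz
  refine ⟨fun z hz ↦ ?_, fun z ↦ continuation α c lam θ (N z) z, fun z hz ↦ ?_, fun z hz _ ↦ ?_,
    fun p _ ↦ ?_⟩
  · simpa only [MellinConvergent, smul_damped] using (hmellin z hz).1
  · exact ((differentiableAt_continuation (hR _ z (hN z)).2 hz).congr_of_eventuallyEq
      (hF _ z (hN z))).differentiableWithinAt
  · simp only [(hF 0 z (by linarith [lt_order hα 0])).self_of_nhds, ← (hmellin z hz).2, mellin,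
      smul_damped]
  · rw [tsum_tsum_ite_eq_sum_box hα.monotone (hN p)]
    refine (tendsto_sub_mul_continuation (hR _ p (hN p)).2.continuousAt).congr' ?_
    exact eventually_nhdsWithin_of_eventually_nhds
      ((hF _ p (hN p)).mono fun z hz ↦ congrArg ((z - p) * ·) hz.symm)

/-- Abstract analytic fact behind the Mellin transform of a heat trace: if `θ` is continuous
on `(0,∞)`, exponentially decaying at `∞`, and has an asymptotic expansion
`θ(t) ∼ ∑ c_k t^{α_k}` as `t → 0` with `α_k → ∞`, then for `λ ≥ 0` the Mellin transform
`M(z) = ∫₀^∞ t^{z−1} e^{−λt} θ(t) dt` converges for `Re z > −α₀` and extends to a function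
holomorphic off `P = {−α_k − n}`, with at most simple poles at points of `P`, the residue at
`p` being `∑_{α_k + n = −p} (−λ)^n c_k / n!`. -/
theorem stmt_3 (θ : ℝ → ℂ) (hcont : ContinuousOn θ (Set.Ioi 0))
    (C δ : ℝ) (hC : 0 < C) (hδ : 0 < δ)
    (hdecay : ∀ t : ℝ, 1 ≤ t → ‖θ t‖ ≤ C * Real.exp (-δ * t))
    (α : ℕ → ℝ) (hα : StrictMono α) (hαtop : Tendsto α atTop atTop)
    (c : ℕ → ℂ)
    (hasym : ∀ K : ℕ, ∃ CK : ℝ, ∀ t ∈ Set.Ioc (0 : ℝ) 1,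
      ‖θ t - ∑ k ∈ Finset.range (K + 1), c k * ((t ^ (α k) : ℝ) : ℂ)‖ ≤ CK * t ^ (α (K + 1)))
    (lam : ℝ) (hlam : 0 ≤ lam) :
    (∀ z : ℂ, -α 0 < z.re →
      IntegrableOn (fun t : ℝ => (t : ℂ) ^ (z - 1) * Complex.exp (-(lam : ℂ) * t) * θ t)
        (Set.Ioi 0)) ∧
    ∃ F : ℂ → ℂ,
      DifferentiableOn ℂ F {z : ℂ | ∀ k n : ℕ, z ≠ -(α k : ℂ) - (n : ℂ)} ∧
      (∀ z : ℂ, -α 0 < z.re → (∀ k n : ℕ, z ≠ -(α k : ℂ) - (n : ℂ)) →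
        F z = ∫ t in Set.Ioi (0 : ℝ),
          (t : ℂ) ^ (z - 1) * Complex.exp (-(lam : ℂ) * t) * θ t) ∧
      (∀ p : ℂ, (∃ k n : ℕ, p = -(α k : ℂ) - (n : ℂ)) →
        Tendsto (fun z : ℂ => (z - p) * F z) (nhdsWithin p {p}ᶜ)
          (nhds (∑' k : ℕ, ∑' n : ℕ,
            if (α k : ℂ) + (n : ℂ) = -p then (-(lam : ℂ)) ^ n * c k / (n.factorial : ℂ)
            else 0))) :=
  stmt_3_general θ hcont C δ hδ hdecay α hα hαtop c hasym lam hlam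
end

section
/- Let ι be an index type, λ : ι → ℝ with λ i > 0 for all i, and let p > 0 be such that the family (λ i)^{−p} is summable. Then for every z ∈ ℂ with Re z > p: the function t ↦ t^{z−1} · ∑_i e^{−(λ i) t} is absolutely integrable on (0,∞) (the sum ∑_i e^{−(λ i) t} converging for every t > 0), and ∫₀^∞ t^{z−1} (∑_i e^{−(λ i) t}) dt = Γ(z) · ∑_i (λ i : ℂ)^{−z}. -/
/-!
Expanding the heat trace, the integrand is `∑ᵢ t ^ (z - 1) e ^ (-λᵢ t)`, and each term has Mellin
integral `Γ(z) λᵢ ^ (-z)`. The integrals of the absolute values of the terms are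
`Γ(Re z) λᵢ ^ (-Re z)`, summable since `Re z > p`, so by monotone convergence `∑ᵢ |termᵢ|` is
integrable; it dominates the series, which can therefore be integrated term by term. Pointwise
convergence of the heat trace follows from `e ^ (-x) ≤ p ^ p x ^ (-p)`.
-/

open MeasureTheory Set Filter

namespace MeasureTheory

variable {α E ι : Type*} [MeasurableSpace α] {μ : Measure α} [NormedAddCommGroup E]
  [CompleteSpace E] [Countable ι]

theorem integrable_tsum {F : ι → α → E} (hF : ∀ i, AEStronglyMeasurable (F i) μ)
    (hF' : ∑' i, ∫⁻ a, ‖F i a‖ₑ ∂μ ≠ ⊤) :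
    Integrable (fun a ↦ ∑' i, F i a) μ := by
  have hlint : ∫⁻ a, ∑' i, ‖F i a‖ₑ ∂μ < ⊤ := by
    rw [lintegral_tsum fun i ↦ (hF i).enorm]
    exact hF'.lt_top
  have hsummable : ∀ᵐ a ∂μ, Summable (F · a) := by
    filter_upwards [ae_lt_top' (AEMeasurable.tsum fun i ↦ (hF i).enorm) hlint.ne]
      with a ha
    exact (tsum_enorm_ne_top_iff_summable_norm.1 ha.ne).of_norm
  refine ⟨aestronglyMeasurable_of_tendsto_ae atTop
    (fun s ↦ Finset.aestronglyMeasurable_fun_sum s fun i _ ↦ hF i) ?_, ?_⟩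
  · filter_upwards [hsummable] with a ha using ha.hasSum
  · exact (lintegral_mono fun a ↦ enorm_tsum_le_tsum_enorm).trans_lt hlint

end MeasureTheory

namespace Real

theorem exp_neg_le_mul_rpow_neg {p x : ℝ} (hp : 0 < p) (hx : 0 < x) :
    exp (-x) ≤ p ^ p * x ^ (-p) := by
  have h : x ^ p / p ^ p ≤ exp x :=
    calc x ^ p / p ^ p = (x / p) ^ p := (div_rpow hx.le hp.le p).symm
      _ ≤ exp (x / p) ^ p := by
        gcongr
        exact (le_add_of_nonneg_right zero_le_one).trans (add_one_le_exp _)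
      _ = exp x := by rw [← exp_mul, div_mul_cancel₀ _ hp.ne']
  rw [exp_neg, rpow_neg hx.le, ← div_eq_mul_inv, ← inv_div]
  exact inv_anti₀ (by positivity) h

end Real

section HeatTrace

variable {ι : Type*} {lam : ι → ℝ}

theorem summable_rpow_neg_of_le (hpos : ∀ i, 0 < lam i) {p q : ℝ} (hp : 0 < p) (hpq : p ≤ q)
    (hsum : Summable fun i ↦ lam i ^ (-p)) : Summable fun i ↦ lam i ^ (-q) := by
  refine hsum.of_norm_bounded_eventually ?_
  filter_upwards [hsum.tendsto_cofinite_zero.eventually_lt_const zero_lt_one] with i hi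
  have hge : 1 ≤ lam i := by
    by_contra! hlt
    exact hi.not_gt <| (Real.one_lt_rpow_iff_of_pos (hpos i)).2 (.inr ⟨hlt, neg_lt_zero.2 hp⟩)
  rw [Real.norm_of_nonneg (Real.rpow_nonneg (hpos i).le _)]
  exact Real.rpow_le_rpow_of_exponent_le hge (neg_le_neg hpq)

theorem summable_exp_neg_mul (hpos : ∀ i, 0 < lam i) {p : ℝ} (hp : 0 < p)
    (hsum : Summable fun i ↦ lam i ^ (-p)) {t : ℝ} (ht : 0 < t) :
    Summable fun i ↦ Real.exp (-lam i * t) := by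
  refine (hsum.mul_left (p ^ p * t ^ (-p))).of_nonneg_of_le (fun i ↦ (Real.exp_pos _).le)
    fun i ↦ ?_
  calc Real.exp (-lam i * t) ≤ p ^ p * (lam i * t) ^ (-p) := by
        rw [neg_mul]; exact Real.exp_neg_le_mul_rpow_neg hp (mul_pos (hpos i) ht)
    _ = p ^ p * t ^ (-p) * lam i ^ (-p) := by
        rw [Real.mul_rpow (hpos i).le ht.le]; ring

theorem countable_of_summable_rpow (hpos : ∀ i, 0 < lam i) {p : ℝ}
    (hsum : Summable fun i ↦ lam i ^ (-p)) : Countable ι := by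
  rw [← Set.countable_univ_iff]
  convert hsum.countable_support
  exact (Function.support_eq_univ fun i ↦ (Real.rpow_pos_of_pos (hpos i) _).ne').symm

end HeatTrace

section MellinExp

open Complex

variable {z : ℂ} {a : ℝ}

theorem aestronglyMeasurable_cpow_mul_exp_neg_mul :
    AEStronglyMeasurable (fun t : ℝ ↦ (t : ℂ) ^ (z - 1) * (Real.exp (-a * t) : ℂ))
      (volume.restrict (Ioi 0)) := by
  refine ContinuousOn.aestronglyMeasurable (fun t ht ↦ ContinuousAt.continuousWithinAt ?_)
    measurableSet_Ioi
  have := continuousAt_ofReal_cpow_const t (z - 1) (.inr ht.ne')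
  fun_prop

theorem lintegral_enorm_cpow_mul_exp_neg_mul (hz : 0 < z.re) (ha : 0 < a) :
    ∫⁻ t in Ioi (0 : ℝ), ‖(t : ℂ) ^ (z - 1) * (Real.exp (-a * t) : ℂ)‖ₑ
      = ENNReal.ofReal (Real.Gamma z.re * a ^ (-z.re)) := by
  have hnorm : ∀ t ∈ Ioi (0 : ℝ), ‖(t : ℂ) ^ (z - 1) * (Real.exp (-a * t) : ℂ)‖ₑ
      = ENNReal.ofReal (t ^ (z.re - 1) * Real.exp (-(a * t))) := by
    intro t ht
    rw [← ofReal_norm, norm_mul, norm_cpow_eq_rpow_re_of_pos ht, norm_real, Real.norm_of_nonneg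
      (Real.exp_pos _).le, sub_re, one_re, neg_mul]
  rw [setLIntegral_congr_fun measurableSet_Ioi hnorm, ← ofReal_integral_eq_lintegral_ofReal,
    Real.integral_rpow_mul_exp_neg_mul_Ioi hz ha, one_div, Real.inv_rpow ha.le,
    ← Real.rpow_neg ha.le, mul_comm]
  · have h := integrableOn_rpow_mul_exp_neg_mul_rpow (s := z.re - 1) (by linarith) one_pos ha
    simp only [Real.rpow_one, neg_mul] at h
    exact h
  · filter_upwards [ae_restrict_mem measurableSet_Ioi] with t ht
    exact mul_nonneg (Real.rpow_nonneg ht.le _) (Real.exp_pos _).le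

theorem integral_cpow_mul_exp_neg_mul (hz : 0 < z.re) (ha : 0 < a) :
    ∫ t in Ioi (0 : ℝ), (t : ℂ) ^ (z - 1) * (Real.exp (-a * t) : ℂ)
      = Gamma z * (a : ℂ) ^ (-z) := by
  push_cast
  simp_rw [neg_mul]
  rw [integral_cpow_mul_exp_neg_mul_Ioi hz ha, one_div,
    inv_cpow _ _ (by rw [arg_ofReal_of_nonneg ha.le]; exact Real.pi_ne_zero.symm), ← cpow_neg,
    mul_comm]

end MellinExp

/-- The identity `M(z) = Γ(z) ζ_A(z)` for a zeta-admissible positive operator, formulated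
directly for a summable family of positive eigenvalues: if `∑ (λ i)^{−p}` is summable
(`p > 0`), then for `Re z > p` the heat trace `∑ e^{−λ i t}` converges for each `t > 0`,
`t ↦ t^{z−1} ∑ e^{−λ i t}` is absolutely integrable on `(0,∞)`, and its Mellin transform
equals `Γ(z) ∑ (λ i)^{−z}`. -/
theorem stmt_7 {ι : Type*} (lam : ι → ℝ) (hpos : ∀ i, 0 < lam i)
    (p : ℝ) (hp : 0 < p) (hsum : Summable fun i => (lam i) ^ (-p)) :
    ∀ z : ℂ, p < z.re →
      (∀ t : ℝ, 0 < t → Summable fun i => Real.exp (-(lam i) * t)) ∧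
      IntegrableOn
        (fun t : ℝ => (t : ℂ) ^ (z - 1) * ((∑' i, Real.exp (-(lam i) * t) : ℝ) : ℂ))
        (Set.Ioi 0) ∧
      ∫ t in Set.Ioi (0 : ℝ),
          (t : ℂ) ^ (z - 1) * ((∑' i, Real.exp (-(lam i) * t) : ℝ) : ℂ)
        = Complex.Gamma z * ∑' i, ((lam i : ℂ)) ^ (-z) := by
  intro z hz
  have hz0 : 0 < z.re := hp.trans hz
  have : Countable ι := countable_of_summable_rpow hpos hsum
  set F : ι → ℝ → ℂ := fun i t ↦ (t : ℂ) ^ (z - 1) * (Real.exp (-lam i * t) : ℂ)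
  have hF_eq : (fun t : ℝ ↦ (t : ℂ) ^ (z - 1) * ((∑' i, Real.exp (-lam i * t) : ℝ) : ℂ))
      = fun t ↦ ∑' i, F i t := by
    funext t
    rw [Complex.ofReal_tsum, tsum_mul_left]
  have hF_meas : ∀ i, AEStronglyMeasurable (F i) (volume.restrict (Ioi 0)) :=
    fun i ↦ aestronglyMeasurable_cpow_mul_exp_neg_mul
  have hF_fin : ∑' i, ∫⁻ t in Ioi (0 : ℝ), ‖F i t‖ₑ ≠ ⊤ := by
    simp_rw [F, lintegral_enorm_cpow_mul_exp_neg_mul hz0 (hpos _)]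
    rw [← ENNReal.ofReal_tsum_of_nonneg (fun i ↦ by have := hpos i; positivity)
      ((summable_rpow_neg_of_le hpos hp hz.le hsum).mul_left _)]
    exact ENNReal.ofReal_ne_top
  refine ⟨fun t ht ↦ summable_exp_neg_mul hpos hp hsum ht, ?_, ?_⟩
  · rw [hF_eq]
    exact integrable_tsum hF_meas hF_fin
  · rw [hF_eq, integral_tsum hF_meas hF_fin]
    simp_rw [F, integral_cpow_mul_exp_neg_mul hz0 (hpos _)]
    exact tsum_mul_left
end
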